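/- arXiv:1911.10515 — 2 statements merged into one kernel-verified Lean document; each statement's English description precedes it below -/
import Mathlib

section
/- If G is a connected star graph with |V(G)| ≥ 3, then every edge of G is contained in at least one triangle. -/
/-!
For intersecting maximal stars `S ≠ T` of `H` it suffices to find a star set `A` that meets both
without lying in either: every maximal star containing `A` is then a common neighbour of `S` and
`T` in the star graph. Such an `A` is an edge or an induced path on three vertices of `H`, found
by a case analysis on the centres `v` of `S` and `w` of `T`, using that a neighbour of the centre
of a maximal star outside it is adjacent to one of its leaves. The case analysis fails only when
each centre is a leaf of the other star; there connectivity and a third vertex of the star graph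
provide a maximal star `R ≠ S, T` meeting `S` or `T`, and `R` either does the job itself or has a
vertex outside `S ∪ T` adjacent to a leaf of the star it meets.
-/
open SimpleGraph

/-- An induced star of `H` with center `v` and leaf set `L`: `L` is a nonempty
independent set of neighbors of `v`. -/
def IsStar {V : Type*} (H : SimpleGraph V) (v : V) (L : Set V) : Prop :=
  L.Nonempty ∧ (∀ u ∈ L, H.Adj v u) ∧ ∀ u ∈ L, ∀ w ∈ L, ¬ H.Adj u w

/-- `S` is the vertex set of an induced star of `H`. -/
def IsStarSet {V : Type*} (H : SimpleGraph V) (S : Set V) : Prop :=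
  ∃ v L, IsStar H v L ∧ S = insert v L

/-- `S` is the vertex set of a maximal induced star of `H`. -/
def IsMaxStarSet {V : Type*} (H : SimpleGraph V) (S : Set V) : Prop :=
  IsStarSet H S ∧ ∀ T, IsStarSet H T → S ⊆ T → S = T

/-- The set of (vertex sets of) maximal induced stars of `H`. -/
def maxStars {V : Type*} (H : SimpleGraph V) : Set (Set V) := {S | IsMaxStarSet H S}

/-- The star graph of `H`: the intersection graph of the maximal induced stars of `H`. -/
def starGraph {V : Type*} (H : SimpleGraph V) : SimpleGraph ↥(maxStars H) :=
  SimpleGraph.fromRel fun S T => ((S : Set V) ∩ (T : Set V)).Nonempty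

theorem SimpleGraph.Connected.exists_adj_of_ne_of_ne {α : Type*} {G : SimpleGraph α}
    (hG : G.Connected) {a b r : α} (hra : r ≠ a) (hrb : r ≠ b) :
    ∃ p, p ≠ a ∧ p ≠ b ∧ (G.Adj p a ∨ G.Adj p b) := by
  obtain ⟨d, -, hd, hd'⟩ :=
    (hG.preconnected r a).some.exists_boundary_dart {a, b}ᶜ (by simp [hra, hrb]) (by simp)
  simp only [Set.mem_compl_iff, Set.mem_insert_iff, Set.mem_singleton_iff, not_or] at hd
  simp only [Set.mem_compl_iff, Set.mem_insert_iff, Set.mem_singleton_iff, not_not] at hd'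
  refine ⟨d.fst, hd.1, hd.2, ?_⟩
  rcases hd' with h | h
  · exact Or.inl (h ▸ d.adj)
  · exact Or.inr (h ▸ d.adj)

theorem Set.exists_mem_ne_ne_of_two_lt_ncard {α : Type*} {s : Set α} (hs : 2 < s.ncard)
    (a b : α) : ∃ c ∈ s, c ≠ a ∧ c ≠ b := by
  by_contra! h
  have hsub : s ⊆ {a, b} := fun c hc => (em (c = a)).imp id (h c hc)
  have := (Set.ncard_le_ncard hsub).trans (Set.ncard_insert_le a {b})
  rw [Set.ncard_singleton] at this
  omega

section StarSets

variable {V : Type*} {H : SimpleGraph V}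

def Straddles (A S T : Set V) : Prop :=
  (A ∩ S).Nonempty ∧ (A ∩ T).Nonempty ∧ ¬ A ⊆ S ∧ ¬ A ⊆ T

namespace Straddles

variable {A S T : Set V}

theorem symm (h : Straddles A S T) : Straddles A T S :=
  ⟨h.2.1, h.1, h.2.2.2, h.2.2.1⟩

theorem mono {C : Set V} (h : Straddles A S T) (hAC : A ⊆ C) : Straddles C S T :=
  ⟨h.1.mono (Set.inter_subset_inter_left _ hAC), h.2.1.mono (Set.inter_subset_inter_left _ hAC),
    fun hC => h.2.2.1 (hAC.trans hC), fun hC => h.2.2.2 (hAC.trans hC)⟩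

theorem of_mem_inter_of_not_mem {x y : V} (hxA : x ∈ A) (hxS : x ∈ S) (hxT : x ∈ T)
    (hyA : y ∈ A) (hyS : y ∉ S) (hyT : y ∉ T) : Straddles A S T :=
  ⟨⟨x, hxA, hxS⟩, ⟨x, hxA, hxT⟩, fun h => hyS (h hyA), fun h => hyT (h hyA)⟩

theorem of_mem_sdiff {x y : V} (hxA : x ∈ A) (hxS : x ∈ S) (hxT : x ∉ T)
    (hyA : y ∈ A) (hyT : y ∈ T) (hyS : y ∉ S) : Straddles A S T :=
  ⟨⟨x, hxA, hxS⟩, ⟨y, hyA, hyT⟩, fun h => hyS (h hyA), fun h => hxT (h hxA)⟩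

end Straddles

theorem isStarSet_pair {a b : V} (h : H.Adj a b) : IsStarSet H {a, b} := by
  refine ⟨a, {b}, ⟨⟨b, rfl⟩, ?_, ?_⟩, rfl⟩
  · rintro u rfl
    exact h
  · rintro u rfl w rfl
    exact H.irrefl

theorem isStarSet_triple {a b c : V} (hab : H.Adj a b) (hac : H.Adj a c) (hbc : ¬ H.Adj b c) :
    IsStarSet H {a, b, c} := by
  refine ⟨a, {b, c}, ⟨⟨b, Or.inl rfl⟩, ?_, ?_⟩, rfl⟩
  · rintro u (rfl | rfl)
    exacts [hab, hac]
  · rintro u (rfl | rfl) w (rfl | rfl)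
    exacts [H.irrefl, hbc, fun h => hbc h.symm, H.irrefl]

theorem IsStar.not_mem_insert_of_adj {v l y : V} {L : Set V} (hL : IsStar H v L) (hl : l ∈ L)
    (hly : H.Adj l y) (hyv : y ≠ v) : y ∉ insert v L := by
  rintro (rfl | hy)
  · exact hyv rfl
  · exact hL.2.2 l hl y hy hly

theorem IsStarSet.exists_isMaxStarSet_superset [Finite V] {A : Set V} (hA : IsStarSet H A) :
    ∃ C, IsMaxStarSet H C ∧ A ⊆ C := by
  obtain ⟨C, hAC, hC, hmax⟩ := Finite.exists_le_maximal hA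
  exact ⟨C, ⟨hC, fun T hT hCT => (hCT.antisymm (hmax hT hCT))⟩, hAC⟩

theorem IsMaxStarSet.not_subset_of_ne {R S : Set V} (hR : IsMaxStarSet H R) (hS : IsStarSet H S)
    (hRS : R ≠ S) : ¬ R ⊆ S :=
  fun h => hRS (hR.2 S hS h)

/-- Otherwise `u` could be added to `L`. -/
theorem IsMaxStarSet.exists_adj_leaf {v u : V} {L : Set V} (hmax : IsMaxStarSet H (insert v L))
    (hL : IsStar H v L) (hvu : H.Adj v u) (hu : u ∉ insert v L) : ∃ l ∈ L, H.Adj u l := by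
  by_contra! hcon
  have hstar : IsStarSet H (insert v (insert u L)) := by
    refine ⟨v, insert u L, ⟨⟨u, Set.mem_insert _ _⟩, ?_, ?_⟩, rfl⟩
    · rintro a (rfl | ha)
      exacts [hvu, hL.2.1 a ha]
    · rintro a (rfl | ha) b (rfl | hb)
      exacts [H.irrefl, hcon b hb, fun h => hcon a ha h.symm, hL.2.2 a ha b hb]
  have heq := hmax.2 _ hstar (Set.insert_subset_insert (Set.subset_insert _ _))
  exact hu (heq ▸ Set.mem_insert_of_mem v (Set.mem_insert u L))

theorem IsStar.exists_adj_of_mem_insert {c s : V} {N : Set V} (hN : IsStar H c N)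
    (hs : s ∈ insert c N) : ∃ y ∈ insert c N, H.Adj s y := by
  rcases hs with rfl | hsN
  · obtain ⟨n, hn⟩ := hN.1
    exact ⟨n, Or.inr hn, hN.2.1 n hn⟩
  · exact ⟨c, Or.inl rfl, (hN.2.1 s hsN).symm⟩

section Straddling

variable {v w : V} {L M : Set V}

theorem exists_straddling_of_center_eq (hL : IsStar H v L) (hM : IsStar H v M)
    (hT : IsMaxStarSet H (insert v M)) (hLM : ¬ L ⊆ M) :
    ∃ A, IsStarSet H A ∧ Straddles A (insert v L) (insert v M) := by
  obtain ⟨l, hlL, hlM⟩ := Set.not_subset.1 hLM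
  have hvl := hL.2.1 l hlL
  have hlT : l ∉ insert v M := by
    rintro (rfl | h)
    exacts [H.irrefl hvl, hlM h]
  obtain ⟨m, hmM, hlm⟩ := hT.exists_adj_leaf hM hvl hlT
  have hmS := hL.not_mem_insert_of_adj hlL hlm (hM.2.1 m hmM).ne'
  exact ⟨{l, m}, isStarSet_pair hlm,
    .of_mem_sdiff (Or.inl rfl) (Or.inr hlL) hlT (Or.inr rfl) (Or.inr hmM) hmS⟩

theorem exists_straddling_of_center_mem_of_center_not_mem (hL : IsStar H v L)
    (hM : IsStar H w M) (hS : IsMaxStarSet H (insert v L)) (hvM : v ∈ M) (hwL : w ∉ L) :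
    ∃ A, IsStarSet H A ∧ Straddles A (insert v L) (insert w M) := by
  have hwv := hM.2.1 v hvM
  have hwS : w ∉ insert v L := by
    rintro (rfl | h)
    exacts [H.irrefl hwv, hwL h]
  obtain ⟨l, hlL, hwl⟩ := hS.exists_adj_leaf hL hwv.symm hwS
  have hlT := hM.not_mem_insert_of_adj hvM (hL.2.1 l hlL) hwl.ne'
  exact ⟨{w, l}, isStarSet_pair hwl,
    .of_mem_sdiff (Or.inr rfl) (Or.inr hlL) hlT (Or.inl rfl) (Or.inl rfl) hwS⟩

theorem exists_straddling_of_centers_not_mem {x : V} (hL : IsStar H v L) (hM : IsStar H w M)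
    (hvT : v ∉ insert w M) (hwS : w ∉ insert v L) (hxS : x ∈ insert v L)
    (hxT : x ∈ insert w M) :
    ∃ A, IsStarSet H A ∧ Straddles A (insert v L) (insert w M) := by
  have hxL : x ∈ L := hxS.resolve_left (by rintro rfl; exact hvT hxT)
  have hxM : x ∈ M := hxT.resolve_left (by rintro rfl; exact hwS hxS)
  by_cases hvw : H.Adj v w
  · exact ⟨{v, w}, isStarSet_pair hvw,
      .of_mem_sdiff (Or.inl rfl) (Or.inl rfl) hvT (Or.inr rfl) (Or.inl rfl) hwS⟩
  · exact ⟨{x, v, w}, isStarSet_triple (hL.2.1 x hxL).symm (hM.2.1 x hxM).symm hvw,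
      .of_mem_sdiff (Or.inr (Or.inl rfl)) (Or.inl rfl) hvT (Or.inr (Or.inr rfl)) (Or.inl rfl) hwS⟩

theorem exists_straddling_of_leaf_adj {s y : V} {T : Set V} (hL : IsStar H v L) (hsL : s ∈ L)
    (hsy : H.Adj s y) (hvT : v ∈ T) (hyT : y ∉ T) (hyv : y ≠ v) :
    ∃ A, IsStarSet H A ∧ Straddles A (insert v L) T := by
  have hyS := hL.not_mem_insert_of_adj hsL hsy hyv
  by_cases hvy : H.Adj v y
  · exact ⟨{v, y}, isStarSet_pair hvy,
      .of_mem_inter_of_not_mem (Or.inl rfl) (Or.inl rfl) hvT (Or.inr rfl) hyS hyT⟩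
  · exact ⟨{s, y, v}, isStarSet_triple hsy (hL.2.1 s hsL).symm fun h => hvy h.symm,
      .of_mem_inter_of_not_mem (Or.inr (Or.inr rfl)) (Or.inl rfl) hvT (Or.inr (Or.inl rfl))
        hyS hyT⟩

/-- Unless `R` meets `T`, the vertex `s ∈ R ∩ S` is a leaf of `S` with a neighbour in `R`, which
lies outside `S ∪ T`. -/
theorem exists_straddling_of_center_mem {s : V} {R T : Set V} (hL : IsStar H v L)
    (hT : IsStarSet H T) (hvT : v ∈ T) (hR : IsMaxStarSet H R) (hRS : R ≠ insert v L)
    (hRT : R ≠ T) (hsR : s ∈ R) (hsS : s ∈ insert v L) :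
    ∃ A, IsStarSet H A ∧ Straddles A (insert v L) T := by
  by_cases hRT' : (R ∩ T).Nonempty
  · exact ⟨R, hR.1, ⟨s, hsR, hsS⟩, hRT', hR.not_subset_of_ne ⟨v, L, hL, rfl⟩ hRS,
      hR.not_subset_of_ne hT hRT⟩
  obtain ⟨c, N, hN, rfl⟩ := hR.1
  have hvR : v ∉ insert c N := fun h => hRT' ⟨v, h, hvT⟩
  have hsL : s ∈ L := hsS.resolve_left (by rintro rfl; exact hvR hsR)
  obtain ⟨y, hyR, hsy⟩ := hN.exists_adj_of_mem_insert hsR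
  exact exists_straddling_of_leaf_adj hL hsL hsy hvT (fun h => hRT' ⟨y, hyR, h⟩)
    (by rintro rfl; exact hvR hyR)

end Straddling

theorem exists_straddling_starSet {S T R : Set V} (hS : IsMaxStarSet H S) (hT : IsMaxStarSet H T)
    (hST : S ≠ T) (hST' : (S ∩ T).Nonempty) (hR : IsMaxStarSet H R) (hRS : R ≠ S)
    (hRT : R ≠ T) (hRST : (R ∩ S).Nonempty ∨ (R ∩ T).Nonempty) :
    ∃ A, IsStarSet H A ∧ Straddles A S T := by
  obtain ⟨v, L, hL, rfl⟩ := hS.1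
  obtain ⟨w, M, hM, rfl⟩ := hT.1
  obtain rfl | hvw := eq_or_ne v w
  · exact exists_straddling_of_center_eq hL hM hT
      fun h => hS.not_subset_of_ne hT.1 hST (Set.insert_subset_insert h)
  by_cases hvM : v ∈ M <;> by_cases hwL : w ∈ L
  · rcases hRST with ⟨s, hsR, hsS⟩ | ⟨s, hsR, hsT⟩
    · exact exists_straddling_of_center_mem hL hT.1 (Or.inr hvM) hR hRS hRT hsR hsS
    · obtain ⟨A, hA, h⟩ :=
        exists_straddling_of_center_mem hM hS.1 (Or.inr hwL) hR hRT hRS hsR hsT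
      exact ⟨A, hA, h.symm⟩
  · exact exists_straddling_of_center_mem_of_center_not_mem hL hM hS hvM hwL
  · obtain ⟨A, hA, h⟩ := exists_straddling_of_center_mem_of_center_not_mem hM hL hT hwL hvM
    exact ⟨A, hA, h.symm⟩
  · obtain ⟨x, hxS, hxT⟩ := hST'
    refine exists_straddling_of_centers_not_mem hL hM ?_ ?_ hxS hxT
    · rintro (h | h)
      exacts [hvw h, hvM h]
    · rintro (h | h)
      exacts [hvw h.symm, hwL h]

theorem starGraph_adj_iff {S T : maxStars H} :
    (_root_.starGraph H).Adj S T ↔ S ≠ T ∧ ((S : Set V) ∩ T).Nonempty := by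
  rw [_root_.starGraph, fromRel_adj, Set.inter_comm (T : Set V), or_self]

theorem exists_starGraph_adj_adj [Finite V] {a b r : maxStars H}
    (hab : (_root_.starGraph H).Adj a b) (hra : r ≠ a) (hrb : r ≠ b)
    (hr : (_root_.starGraph H).Adj r a ∨ (_root_.starGraph H).Adj r b) :
    ∃ c, (_root_.starGraph H).Adj a c ∧ (_root_.starGraph H).Adj b c := by
  simp only [starGraph_adj_iff] at hab hr
  obtain ⟨A, hA, hAab⟩ := exists_straddling_starSet a.2 b.2 (Subtype.coe_ne_coe.2 hab.1) hab.2
    r.2 (Subtype.coe_ne_coe.2 hra) (Subtype.coe_ne_coe.2 hrb) (hr.imp And.right And.right)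
  obtain ⟨C, hC, hAC⟩ := hA.exists_isMaxStarSet_superset
  obtain ⟨hCa, hCb, hCa', hCb'⟩ := hAab.mono hAC
  refine ⟨⟨C, hC⟩, starGraph_adj_iff.2 ⟨?_, ?_⟩, starGraph_adj_iff.2 ⟨?_, ?_⟩⟩
  · rintro rfl
    exact hCa' subset_rfl
  · rwa [Set.inter_comm]
  · rintro rfl
    exact hCb' subset_rfl
  · rwa [Set.inter_comm]

end StarSets

/-- Every edge of a connected star graph on at least three vertices lies in a triangle. -/
theorem stmt7 {V : Type*} [Fintype V] (H : SimpleGraph V)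
    (hconn : (_root_.starGraph H).Connected) (h3 : 3 ≤ (maxStars H).ncard) :
    ∀ a b : ↥(maxStars H), (_root_.starGraph H).Adj a b →
      ∃ c : ↥(maxStars H), (_root_.starGraph H).Adj a c ∧ (_root_.starGraph H).Adj b c := by
  intro a b hab
  obtain ⟨r, hr, hra, hrb⟩ := Set.exists_mem_ne_ne_of_two_lt_ncard h3 a b
  obtain ⟨p, hpa, hpb, hp⟩ := hconn.exists_adj_of_ne_of_ne (r := ⟨r, hr⟩)
    (Subtype.coe_ne_coe.1 hra) (Subtype.coe_ne_coe.1 hrb)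
  exact exists_starGraph_adj_adj hab hpa hpb hp
end

section
/- Let H be an n-vertex graph with at least one non-star-critical vertex, and let H' be a graph on n+1 vertices containing H as an induced subgraph. Then either H' has a non-star-critical vertex, or |S(H')| ≥ |S(H)| + 1. -/
open SimpleGraph

/-!
Deleting a vertex `x` is modelled by isolating it (`G.deleteIncidenceSet x`); the maximal stars of
the induced subgraph on `{x}ᶜ` are those of `G.deleteIncidenceSet x`, pulled back along the
inclusion.

Every maximal star of `G - x` is `T \ {x}` for a maximal star `T` of `G`, so
`|S(G - x)| ≤ |S(G)|`. In the equality case `T ↦ T \ {x}` is a bijection whose inverse is a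
homomorphism of star graphs, and it is an isomorphism unless two maximal stars of `G` meet exactly
in `{x}`; as the star graphs are finite, any isomorphism `S(G - x) ≅ S(G)` rules such a pair out.

Now let `H = H' - y`, let `v` be non-star-critical in `H`, and suppose `|S(H')| ≤ |S(H)|`. Then
`|S(H')| ≤ |S(H)| = |S(H - v)| = |S((H' - v) - y)| ≤ |S(H' - v)|`, so `(H', v)` is in the
equality case, and two maximal stars of `H'` meeting exactly in `v` would, after removing `y`, give
two such stars of `H`. Hence `v` is non-star-critical in `H'`.
-/

theorem SimpleGraph.Hom.adj_iff_of_bijective {V W : Type*} [Finite V] [Finite W]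
    {G : SimpleGraph V} {G' : SimpleGraph W} (f : G →g G') (hf : Function.Bijective f)
    (e : G ≃g G') {a b : V} : G'.Adj (f a) (f b) ↔ G.Adj a b := by
  refine ⟨fun h => ?_, f.map_adj⟩
  have hsurj : Function.Surjective f.mapEdgeSet :=
    (Finite.injective_iff_surjective_of_equiv e.mapEdgeSet).mp
      (Hom.mapEdgeSet.injective f hf.injective)
  obtain ⟨⟨e₀, he₀⟩, he⟩ := hsurj ⟨s(f a, f b), h⟩
  have : e₀ = s(a, b) := Sym2.map.injective hf.injective (congrArg Subtype.val he)
  rwa [this] at he₀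

section Stars

variable {V : Type*} {G : SimpleGraph V}

theorem starGraph_adj {A B : maxStars G} :
    (_root_.starGraph G).Adj A B ↔ A ≠ B ∧ ((A : Set V) ∩ B).Nonempty := by
  rw [_root_.starGraph, fromRel_adj, Set.inter_comm (B : Set V), or_self]

theorem IsStarSet.exists_adj {S : Set V} (h : IsStarSet G S) :
    ∀ a ∈ S, ∃ b ∈ S, G.Adj a b := by
  obtain ⟨c, L, ⟨⟨l, hl⟩, hcL, -⟩, rfl⟩ := h
  rintro a (rfl | ha)
  · exact ⟨l, .inr hl, hcL l hl⟩
  · exact ⟨c, .inl rfl, (hcL a ha).symm⟩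

theorem IsStarSet.exists_edge {S : Set V} (h : IsStarSet G S) :
    ∃ a ∈ S, ∃ b ∈ S, G.Adj a b := by
  obtain ⟨c, L, ⟨⟨l, hl⟩, hcL, -⟩, rfl⟩ := h
  exact ⟨c, Set.mem_insert c L, l, Set.mem_insert_of_mem c hl, hcL l hl⟩

theorem IsStarSet.ne_singleton {S : Set V} (h : IsStarSet G S) (x : V) : S ≠ {x} := by
  rintro rfl
  obtain ⟨b, hb, hxb⟩ := h.exists_adj x rfl
  exact hxb.ne hb.symm

theorem IsStarSet.of_subset {S T : Set V} (hT : IsStarSet G T) (hST : S ⊆ T) {a b : V}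
    (ha : a ∈ S) (hb : b ∈ S) (hab : G.Adj a b) : IsStarSet G S := by
  obtain ⟨c, L, ⟨-, hcL, hL⟩, rfl⟩ := hT
  have hleaf : ∀ z ∈ S, z ≠ c → z ∈ L := fun z hz hzc => (hST hz).resolve_left hzc
  have hc : c ∈ S := by
    by_contra hc
    exact hL a (hleaf a ha (ne_of_mem_of_not_mem ha hc)) b
      (hleaf b hb (ne_of_mem_of_not_mem hb hc)) hab
  refine ⟨c, S \ {c}, ⟨?_, fun z hz => hcL z (hleaf z hz.1 hz.2),
    fun u hu w hw => hL u (hleaf u hu.1 hu.2) w (hleaf w hw.1 hw.2)⟩,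
    (Set.insert_sdiff_self_of_mem hc).symm⟩
  by_cases hac : a = c
  · exact ⟨b, hb, (hac ▸ hab.ne).symm⟩
  · exact ⟨a, ha, hac⟩

theorem IsStarSet.of_adj_iff {G' : SimpleGraph V} {S : Set V} (h : IsStarSet G S)
    (hadj : ∀ a ∈ S, ∀ b ∈ S, G.Adj a b ↔ G'.Adj a b) : IsStarSet G' S := by
  obtain ⟨c, L, ⟨hne, hcL, hL⟩, rfl⟩ := h
  have hLS : L ⊆ insert c L := Set.subset_insert c L
  exact ⟨c, L, ⟨hne, fun u hu => (hadj _ (Set.mem_insert c L) _ (hLS hu)).mp (hcL u hu),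
    fun u hu w hw => (hadj _ (hLS hu) _ (hLS hw)).not.mp (hL u hu w hw)⟩, rfl⟩

theorem isStarSet_deleteIncidenceSet_iff {x : V} {S : Set V} :
    IsStarSet (G.deleteIncidenceSet x) S ↔ IsStarSet G S ∧ x ∉ S := by
  have hadj (hx : x ∉ S) : ∀ a ∈ S, ∀ b ∈ S, (G.deleteIncidenceSet x).Adj a b ↔ G.Adj a b :=
    fun a ha b hb => by
      simp [deleteIncidenceSet_adj, ne_of_mem_of_not_mem ha hx, ne_of_mem_of_not_mem hb hx]
  constructor
  · intro h
    have hx : x ∉ S := fun hx => by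
      obtain ⟨b, -, hxb⟩ := h.exists_adj x hx
      exact (deleteIncidenceSet_adj.mp hxb).2.1 rfl
    exact ⟨h.of_adj_iff (hadj hx), hx⟩
  · rintro ⟨h, hx⟩
    exact h.of_adj_iff fun a ha b hb => (hadj hx a ha b hb).symm

theorem isMaxStarSet_iff_maximal {S : Set V} : IsMaxStarSet G S ↔ Maximal (IsStarSet G) S :=
  and_congr_right fun _ => forall₂_congr fun _ _ =>
    ⟨fun h hST => (h hST).symm.le, fun h hST => (h hST).antisymm hST |>.symm⟩

end Stars

section DeleteVertex

variable {V : Type*} {G : SimpleGraph V} {x : V}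

/-- Extend a maximal star of `G - x` to a maximal star `T` of `G`; then `T \ {x}` still contains
an edge, hence is a star of `G - x`, and maximality forces equality. -/
theorem IsMaxStarSet.exists_diff_singleton_eq [Finite V] {W : Set V}
    (hW : IsMaxStarSet (G.deleteIncidenceSet x) W) : ∃ T, IsMaxStarSet G T ∧ T \ {x} = W := by
  obtain ⟨hWG, hxW⟩ := isStarSet_deleteIncidenceSet_iff.mp hW.1
  obtain ⟨T, hWT, hT⟩ := Finite.exists_le_maximal hWG
  have hWTx : W ⊆ T \ {x} := fun z hz => ⟨hWT hz, ne_of_mem_of_not_mem hz hxW⟩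
  obtain ⟨a, ha, b, hb, hab⟩ := hWG.exists_edge
  have hTx : IsStarSet (G.deleteIncidenceSet x) (T \ {x}) :=
    isStarSet_deleteIncidenceSet_iff.mpr
      ⟨hT.prop.of_subset Set.sdiff_subset (hWTx ha) (hWTx hb) hab, fun h => h.2 rfl⟩
  exact ⟨T, isMaxStarSet_iff_maximal.mpr hT, (hW.2 _ hTx hWTx).symm⟩

theorem maxStars_deleteIncidenceSet_subset_image [Finite V] :
    maxStars (G.deleteIncidenceSet x) ⊆ (· \ {x}) '' maxStars G := fun _ hW =>
  IsMaxStarSet.exists_diff_singleton_eq hW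

theorem ncard_maxStars_deleteIncidenceSet_le [Finite V] :
    (maxStars (G.deleteIncidenceSet x)).ncard ≤ (maxStars G).ncard :=
  (Set.ncard_le_ncard maxStars_deleteIncidenceSet_subset_image).trans Set.ncard_image_le

theorem bijOn_diff_singleton_maxStars [Finite V]
    (hle : (maxStars G).ncard ≤ (maxStars (G.deleteIncidenceSet x)).ncard) :
    Set.BijOn (· \ {x}) (maxStars G) (maxStars (G.deleteIncidenceSet x)) := by
  have hsub := maxStars_deleteIncidenceSet_subset_image (G := G) (x := x)
  have himage : (· \ {x}) '' maxStars G = maxStars (G.deleteIncidenceSet x) :=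
    (Set.eq_of_subset_of_ncard_le hsub (le_trans Set.ncard_image_le hle)).symm
  have hinj : Set.InjOn (· \ {x}) (maxStars G) :=
    Set.injOn_of_ncard_image_eq (le_antisymm Set.ncard_image_le (himage ▸ hle))
  exact himage ▸ hinj.bijOn_image

theorem deleteIncidenceSet_comm (y : V) :
    (G.deleteIncidenceSet x).deleteIncidenceSet y =
      (G.deleteIncidenceSet y).deleteIncidenceSet x := by
  ext a b
  simp only [deleteIncidenceSet_adj]
  tauto

end DeleteVertex

def MaxStarsMeetOnlyAt {V : Type*} (G : SimpleGraph V) (x : V) : Prop :=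
  ∃ T₁ ∈ maxStars G, ∃ T₂ ∈ maxStars G, T₁ ∩ T₂ = {x}

section EqualityCase

variable {V : Type*} [Finite V] {G : SimpleGraph V} {x : V}
  (hle : (maxStars G).ncard ≤ (maxStars (G.deleteIncidenceSet x)).ncard)
include hle

noncomputable def maxStarsDiffSingletonEquiv : maxStars G ≃ maxStars (G.deleteIncidenceSet x) :=
  (bijOn_diff_singleton_maxStars hle).equiv _

theorem coe_maxStarsDiffSingletonEquiv (T : maxStars G) :
    (maxStarsDiffSingletonEquiv hle T : Set V) = (T : Set V) \ {x} :=
  rfl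

theorem starGraph_adj_maxStarsDiffSingletonEquiv {T₁ T₂ : maxStars G} :
    (_root_.starGraph (G.deleteIncidenceSet x)).Adj
        (maxStarsDiffSingletonEquiv hle T₁) (maxStarsDiffSingletonEquiv hle T₂) ↔
      T₁ ≠ T₂ ∧ (((T₁ : Set V) ∩ T₂) \ {x}).Nonempty := by
  rw [_root_.starGraph_adj, (maxStarsDiffSingletonEquiv hle).injective.ne_iff]
  rw [coe_maxStarsDiffSingletonEquiv, coe_maxStarsDiffSingletonEquiv,
    Set.sdiff_inter_distrib_right]

noncomputable def starGraphDeleteIncidenceSetHom :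
    _root_.starGraph (G.deleteIncidenceSet x) →g _root_.starGraph G where
  toFun := (maxStarsDiffSingletonEquiv hle).symm
  map_rel' {A B} h := by
    rw [← (maxStarsDiffSingletonEquiv hle).apply_symm_apply A,
      ← (maxStarsDiffSingletonEquiv hle).apply_symm_apply B,
      starGraph_adj_maxStarsDiffSingletonEquiv] at h
    exact _root_.starGraph_adj.mpr ⟨h.1, h.2.mono Set.sdiff_subset⟩

theorem starGraphDeleteIncidenceSetHom_apply (T : maxStars G) :
    starGraphDeleteIncidenceSetHom hle (maxStarsDiffSingletonEquiv hle T) = T :=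
  Equiv.symm_apply_apply _ T

theorem not_maxStarsMeetOnlyAt_of_starGraph_iso
    (e : _root_.starGraph (G.deleteIncidenceSet x) ≃g _root_.starGraph G) :
    ¬ MaxStarsMeetOnlyAt G x := by
  rintro ⟨T₁, h₁, T₂, h₂, hT⟩
  have hne : (⟨T₁, h₁⟩ : maxStars G) ≠ ⟨T₂, h₂⟩ := fun h => by
    obtain rfl : T₁ = T₂ := congrArg Subtype.val h
    exact h₁.1.ne_singleton x (Set.inter_self T₁ ▸ hT)
  have hadj : (_root_.starGraph G).Adj ⟨T₁, h₁⟩ ⟨T₂, h₂⟩ :=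
    _root_.starGraph_adj.mpr ⟨hne, by simp [hT]⟩
  rw [← starGraphDeleteIncidenceSetHom_apply hle ⟨T₁, h₁⟩,
    ← starGraphDeleteIncidenceSetHom_apply hle ⟨T₂, h₂⟩,
    (starGraphDeleteIncidenceSetHom hle).adj_iff_of_bijective
      (maxStarsDiffSingletonEquiv hle).symm.bijective e,
    starGraph_adj_maxStarsDiffSingletonEquiv] at hadj
  simp [hT] at hadj

theorem nonempty_starGraph_iso_of_not_maxStarsMeetOnlyAt (h : ¬ MaxStarsMeetOnlyAt G x) :
    Nonempty (_root_.starGraph (G.deleteIncidenceSet x) ≃g _root_.starGraph G) := by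
  refine ⟨RelIso.symm ⟨maxStarsDiffSingletonEquiv hle, fun {T₁ T₂} => ?_⟩⟩
  rw [starGraph_adj_maxStarsDiffSingletonEquiv, _root_.starGraph_adj]
  refine and_congr_right fun _ => ⟨(·.mono Set.sdiff_subset), fun hne => ?_⟩
  refine Set.sdiff_nonempty.mpr fun hsub => h ⟨T₁, T₁.2, T₂, T₂.2, ?_⟩
  exact hne.subset_singleton_iff.mp hsub

theorem MaxStarsMeetOnlyAt.deleteIncidenceSet {y : V} (hyx : y ≠ x)
    (h : MaxStarsMeetOnlyAt G y) : MaxStarsMeetOnlyAt (G.deleteIncidenceSet x) y := by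
  obtain ⟨T₁, h₁, T₂, h₂, hT⟩ := h
  have hbij := bijOn_diff_singleton_maxStars hle
  refine ⟨T₁ \ {x}, hbij.mapsTo h₁, T₂ \ {x}, hbij.mapsTo h₂, ?_⟩
  rw [← Set.sdiff_inter_distrib_right, hT,
    Set.sdiff_singleton_eq_self (Set.notMem_singleton_iff.mpr hyx.symm)]

end EqualityCase

section Map

variable {V W : Type*} {G : SimpleGraph V} (f : V ↪ W)

theorem IsStarSet.subset_range_of_map {S : Set W} (h : IsStarSet (G.map f) S) :
    S ⊆ Set.range f := fun a ha => by
  obtain ⟨b, -, hab⟩ := h.exists_adj a ha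
  obtain ⟨a', -, -, rfl, -⟩ := (map_adj f G a b).mp hab
  exact ⟨a', rfl⟩

theorem isStar_map_image {c : V} {L : Set V} :
    IsStar (G.map f) (f c) (f '' L) ↔ IsStar G c L := by
  simp only [IsStar, Set.image_nonempty, Set.forall_mem_image, map_adj_apply]

theorem isStarSet_map_image {R : Set V} : IsStarSet (G.map f) (f '' R) ↔ IsStarSet G R := by
  constructor
  · rintro ⟨c', L', h, hR⟩
    obtain ⟨c, -, rfl⟩ : c' ∈ f '' R := hR ▸ Set.mem_insert c' L'
    have hL' : f '' (f ⁻¹' L') = L' := Set.image_preimage_eq_of_subset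
      ((Set.subset_insert _ _).trans (hR ▸ Set.image_subset_range f R))
    rw [← hL', ← Set.image_insert_eq] at hR
    rw [← hL', isStar_map_image] at h
    exact ⟨c, _, h, Set.image_injective.mpr f.injective hR⟩
  · rintro ⟨c, L, h, rfl⟩
    exact ⟨f c, f '' L, (isStar_map_image f).mpr h, Set.image_insert_eq⟩

theorem isMaxStarSet_map_image {R : Set V} :
    IsMaxStarSet (G.map f) (f '' R) ↔ IsMaxStarSet G R := by
  have himage_inj := Set.image_injective.mpr f.injective
  rw [IsMaxStarSet, IsMaxStarSet, isStarSet_map_image]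
  refine and_congr_right fun hR => ⟨fun h T hT hRT => ?_, fun h S hS hRS => ?_⟩
  · exact himage_inj (h _ ((isStarSet_map_image f).mpr hT) (Set.image_mono hRT))
  · have hSf : f '' (f ⁻¹' S) = S := Set.image_preimage_eq_of_subset hS.subset_range_of_map
    rw [← hSf, isStarSet_map_image] at hS
    rw [← hSf, Set.image_subset_image_iff f.injective] at hRS
    rw [h _ hS hRS, hSf]

theorem bijOn_image_maxStars_map :
    Set.BijOn (Set.image f) (maxStars G) (maxStars (G.map f)) := by
  refine ⟨fun R hR => (isMaxStarSet_map_image f).mpr hR,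
    (Set.image_injective.mpr f.injective).injOn, fun S hS => ?_⟩
  have hS' := hS
  rw [← Set.image_preimage_eq_of_subset hS.1.subset_range_of_map] at hS' ⊢
  exact ⟨_, (isMaxStarSet_map_image f).mp hS', rfl⟩

noncomputable def starGraphMapIso : _root_.starGraph G ≃g _root_.starGraph (G.map f) where
  toEquiv := (bijOn_image_maxStars_map f).equiv _
  map_rel_iff' {A B} := by
    rw [_root_.starGraph_adj, _root_.starGraph_adj, Equiv.injective _ |>.ne_iff]
    exact and_congr_right fun _ => by
      rw [Set.BijOn.equiv, Equiv.ofBijective_apply]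
      simp [← Set.image_inter f.injective]

theorem map_deleteIncidenceSet (x : V) :
    (G.deleteIncidenceSet x).map f = (G.map f).deleteIncidenceSet (f x) := by
  ext a b
  simp only [map_adj, deleteIncidenceSet_adj]
  constructor
  · rintro ⟨a, b, ⟨hab, ha, hb⟩, rfl, rfl⟩
    exact ⟨⟨a, b, hab, rfl, rfl⟩, f.injective.ne ha, f.injective.ne hb⟩
  · rintro ⟨⟨a, b, hab, rfl, rfl⟩, ha, hb⟩
    exact ⟨a, b, ⟨hab, ne_of_apply_ne f ha, ne_of_apply_ne f hb⟩, rfl, rfl⟩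

theorem map_subtype_induce_compl (x : V) :
    (G.induce {x}ᶜ).map (Function.Embedding.subtype _) = G.deleteIncidenceSet x := by
  ext a b
  simp only [map_adj, comap_adj, Function.Embedding.subtype_apply, deleteIncidenceSet_adj]
  constructor
  · rintro ⟨a, b, hab, rfl, rfl⟩
    exact ⟨hab, a.2, b.2⟩
  · rintro ⟨hab, ha, hb⟩
    exact ⟨⟨a, ha⟩, ⟨b, hb⟩, hab, rfl, rfl⟩

end Map

noncomputable def starGraphInduceComplIso {V : Type*} (G : SimpleGraph V) (x : V) :
    _root_.starGraph (G.induce {x}ᶜ) ≃g _root_.starGraph (G.deleteIncidenceSet x) :=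
  map_subtype_induce_compl (G := G) x ▸ starGraphMapIso _

theorem ncard_maxStars_eq_of_iso {V W : Type*} {G : SimpleGraph V} {G' : SimpleGraph W}
    (e : _root_.starGraph G ≃g _root_.starGraph G') :
    (maxStars G).ncard = (maxStars G').ncard := by
  rw [← Nat.card_coe_set_eq, ← Nat.card_coe_set_eq, Nat.card_congr e.toEquiv]

noncomputable def starGraphInduceComplInduceComplIso {V : Type*} (G : SimpleGraph V) (y : V)
    (v : ({y}ᶜ : Set V)) :
    _root_.starGraph ((G.induce {y}ᶜ).induce {v}ᶜ) ≃g
      _root_.starGraph ((G.deleteIncidenceSet y).deleteIncidenceSet v) :=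
  have hmap : ((G.induce {y}ᶜ).deleteIncidenceSet v).map (Function.Embedding.subtype _) =
      (G.deleteIncidenceSet y).deleteIncidenceSet v := by
    rw [map_deleteIncidenceSet, map_subtype_induce_compl]
    rfl
  (starGraphInduceComplIso _ v).trans (hmap ▸ starGraphMapIso _)

/-- Monotonicity: if `H = H' - y` has a non-star-critical vertex, then either `H'`
has a non-star-critical vertex, or `H'` has strictly more maximal stars than `H`. -/
theorem stmt12 {V' : Type*} [Fintype V'] (H' : SimpleGraph V') (y : V')
    (hnc : ∃ v : ({y}ᶜ : Set V'),
      Nonempty (_root_.starGraph ((H'.induce ({y}ᶜ : Set V')).induce ({v}ᶜ : Set ({y}ᶜ : Set V')))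
        ≃g _root_.starGraph (H'.induce ({y}ᶜ : Set V')))) :
    (∃ w : V', Nonempty (_root_.starGraph (H'.induce ({w}ᶜ : Set V')) ≃g _root_.starGraph H')) ∨
      (maxStars (H'.induce ({y}ᶜ : Set V'))).ncard + 1 ≤ (maxStars H').ncard := by
  obtain ⟨v, ⟨e⟩⟩ := hnc
  rw [ncard_maxStars_eq_of_iso (starGraphInduceComplIso H' y)]
  refine or_iff_not_imp_right.mpr fun hgrow => ⟨v, ?_⟩
  have hle_y : (maxStars H').ncard ≤ (maxStars (H'.deleteIncidenceSet y)).ncard := by omega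
  have ev : _root_.starGraph ((H'.deleteIncidenceSet y).deleteIncidenceSet v) ≃g
      _root_.starGraph (H'.deleteIncidenceSet y) :=
    (starGraphInduceComplInduceComplIso H' y v).symm.trans (e.trans (starGraphInduceComplIso H' y))
  have hcard_v := ncard_maxStars_eq_of_iso ev
  have hle_v : (maxStars H').ncard ≤ (maxStars (H'.deleteIncidenceSet v)).ncard :=
    calc (maxStars H').ncard
      _ ≤ (maxStars (H'.deleteIncidenceSet y)).ncard := hle_y
      _ = (maxStars ((H'.deleteIncidenceSet v).deleteIncidenceSet y)).ncard := by
        rw [← hcard_v, deleteIncidenceSet_comm]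
      _ ≤ (maxStars (H'.deleteIncidenceSet v)).ncard := ncard_maxStars_deleteIncidenceSet_le
  have hmeet_y : ¬ MaxStarsMeetOnlyAt (H'.deleteIncidenceSet y) v :=
    not_maxStarsMeetOnlyAt_of_starGraph_iso hcard_v.ge ev
  obtain ⟨μ⟩ := nonempty_starGraph_iso_of_not_maxStarsMeetOnlyAt hle_v
    fun h => hmeet_y (h.deleteIncidenceSet hle_y v.2)
  exact ⟨(starGraphInduceComplIso H' v).trans μ⟩
end
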